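/- arXiv:2304.06453 — 10 statements merged into one kernel-verified Lean document; each statement's English description precedes it below -/
import Mathlib

section
/- Let G be a finite simple connected graph and let μ be a median-consistent vertex of G. Then for every edge {u,v} of G, |d(μ,u) − d(μ,v)| = 1. -/
open SimpleGraph

/-- `z` lies on some shortest path connecting `u` and `v` in the graph `G`,
i.e. `z ∈ I(u,v)`. -/
def OnShortestPath {V : Type*} (G : SimpleGraph V) (u v z : V) : Prop :=
  ∃ p : G.Walk u v, p.length = G.dist u v ∧ z ∈ p.support

/-- `m` is a median point of the triple `u, v, w`, i.e. `m ∈ I(u,v) ∩ I(u,w) ∩ I(v,w)`. -/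
def IsMedianPt {V : Type*} (G : SimpleGraph V) (u v w m : V) : Prop :=
  OnShortestPath G u v m ∧ OnShortestPath G u w m ∧ OnShortestPath G v w m

/-- `μ` is a median-consistent (medico) vertex of `G`:
`|I(μ,v,w)| = 1` for all vertices `v, w`. -/
def Medico {V : Type*} (G : SimpleGraph V) (μ : V) : Prop :=
  ∀ v w : V, ∃! m : V, IsMedianPt G μ v w m

lemma osp_dist {V : Type*} {G : SimpleGraph V} (hconn : G.Connected) {u v z : V}
    (h : OnShortestPath G u v z) : G.dist u z + G.dist z v = G.dist u v := by
  classical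
  obtain ⟨p, hlen, hz⟩ := h
  have hsum : (p.takeUntil z hz).length + (p.dropUntil z hz).length = p.length := by
    rw [← Walk.length_append, Walk.take_spec]
  have h1 := G.dist_le (p.takeUntil z hz)
  have h2 := G.dist_le (p.dropUntil z hz)
  have h3 := hconn.dist_triangle (u := u) (v := z) (w := v)
  omega

/-- If `μ` is a median-consistent vertex of a finite connected graph `G`,
then `|d(μ,u) - d(μ,v)| = 1` for every edge `{u,v}` of `G`. -/
theorem stmt1 {V : Type*} [Fintype V] (G : SimpleGraph V) (hconn : G.Connected)
    (μ : V) (hμ : Medico G μ) :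
    ∀ u v : V, G.Adj u v → |(G.dist μ u : ℤ) - (G.dist μ v : ℤ)| = 1 := by
  intro u v huv
  have hduv : G.dist u v = 1 := dist_eq_one_iff_adj.mpr huv
  have hdvu : G.dist v u = 1 := by rw [SimpleGraph.dist_comm] at hduv; exact hduv
  have h1 : G.dist μ u ≤ G.dist μ v + 1 := by
    have := hconn.dist_triangle (u := μ) (v := v) (w := u); omega
  have h2 : G.dist μ v ≤ G.dist μ u + 1 := by
    have := hconn.dist_triangle (u := μ) (v := u) (w := v); omega
  have hne : G.dist μ u ≠ G.dist μ v := by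
    intro heq
    obtain ⟨m, hm, -⟩ := hμ u v
    obtain ⟨h_uv, h_μu, h_μv⟩ := hm
    have huvm := osp_dist hconn h_μv
    have hμum := osp_dist hconn h_uv
    have hμvm := osp_dist hconn h_μu
    -- huvm : dist u m + dist m v = dist u v = 1
    have hm0 : G.dist u m = 0 ∨ G.dist m v = 0 := by omega
    rcases hm0 with h0 | h0
    · have : u = m := by
        have hr : G.Reachable u m := hconn u m
        exact (hconn.dist_eq_zero_iff.mp h0)
      subst this
      -- hμvm : dist μ u + dist u v = dist μ v
      omega
    · have : m = v := hconn.dist_eq_zero_iff.mp h0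
      subst this
      omega
  have : (G.dist μ u : ℤ) - G.dist μ v = 1 ∨ (G.dist μ u : ℤ) - G.dist μ v = -1 := by
    omega
  rcases this with h | h <;> rw [h] <;> norm_num
end

section
/- Every finite simple connected graph that contains at least one median-consistent vertex is bipartite. -/
open SimpleGraph

lemma dist_add_dist_le_of_mem_support {V : Type*} [DecidableEq V] {G : SimpleGraph V} {u v z : V}
    (p : G.Walk u v) (hz : z ∈ p.support) :
    G.dist u z + G.dist z v ≤ p.length := by
  have h1 := SimpleGraph.dist_le (p.takeUntil z hz)
  have h2 := SimpleGraph.dist_le (p.dropUntil z hz)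
  have h3 := congr_arg SimpleGraph.Walk.length (p.take_spec hz)
  rw [SimpleGraph.Walk.length_append] at h3
  omega

/-- Every finite connected graph containing at least one
median-consistent vertex is bipartite (i.e. 2-colorable). -/
theorem stmt2 {V : Type*} [Fintype V] (G : SimpleGraph V) (hconn : G.Connected)
    (hμ : ∃ μ : V, Medico G μ) :
    G.Colorable 2 := by
  classical
  obtain ⟨μ, hm⟩ := hμ
  -- key: adjacent vertices have different distance from μ
  have key : ∀ v w : V, G.Adj v w → G.dist μ v ≠ G.dist μ w := by
    intro v w hadj heq
    obtain ⟨m, ⟨⟨p1, hp1l, hp1m⟩, ⟨p2, hp2l, hp2m⟩, ⟨p3, hp3l, hp3m⟩⟩, -⟩ := hm v w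
    have hdvw : G.dist v w = 1 := SimpleGraph.dist_eq_one_iff_adj.mpr hadj
    -- m is on a shortest v-w walk, of length 1, so m = v or m = w
    have h3 := dist_add_dist_le_of_mem_support p3 hp3m
    rw [hp3l, hdvw] at h3
    have hmv : m = v ∨ m = w := by
      have : G.dist v m = 0 ∨ G.dist m w = 0 := by omega
      rcases this with h | h
      · exact Or.inl (hconn.dist_eq_zero_iff.mp h).symm
      · exact Or.inr (hconn.dist_eq_zero_iff.mp h)
    have hdwv : G.dist w v = 1 := SimpleGraph.dist_eq_one_iff_adj.mpr hadj.symm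
    rcases hmv with rfl | rfl
    · -- m = v, on shortest μ-w walk: dist μ v + dist v w ≤ dist μ w
      have h2 := dist_add_dist_le_of_mem_support p2 hp2m
      rw [hp2l, hdvw] at h2
      omega
    · have h1 := dist_add_dist_le_of_mem_support p1 hp1m
      rw [hp1l, hdwv] at h1
      omega
  refine ⟨⟨fun x => ⟨G.dist μ x % 2, Nat.mod_lt _ (by norm_num)⟩, ?_⟩⟩
  intro v w hadj hne
  have h1 : G.dist μ v ≤ G.dist μ w + G.dist w v := SimpleGraph.Connected.dist_triangle hconn
  have h2 : G.dist μ w ≤ G.dist μ v + G.dist v w := SimpleGraph.Connected.dist_triangle hconn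
  rw [SimpleGraph.dist_eq_one_iff_adj.mpr hadj.symm] at h1
  rw [SimpleGraph.dist_eq_one_iff_adj.mpr hadj] at h2
  have h3 := key v w hadj
  have : G.dist μ v % 2 = G.dist μ w % 2 := by
    simpa [Fin.ext_iff] using hne
  omega
end

section
/- Let G be a finite simple connected graph with a median-consistent vertex μ, and let C be an induced cycle in G. Let v be a vertex of C at minimum distance K = d_G(v,μ) from μ among all vertices of C, let u be any vertex of C, and set i = d_C(u,v) (the distance along the cycle C). Then K ≤ d_G(μ,u) ≤ K + i and d_G(μ,u) − K has the same parity as i; in particular d_G(μ,u) ∈ {K+1, K+3, …, K+i} if i is odd and d_G(μ,u) ∈ {K, K+2, …, K+i} if i is even. -/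
open SimpleGraph

/-- Across any edge, distances to a medico vertex differ by exactly one. -/
lemma medico_step {V : Type*} {G : SimpleGraph V} (hconn : G.Connected) {μ : V}
    (hμ : Medico G μ) {x y : V} (hxy : G.Adj x y) :
    G.dist μ x + 1 = G.dist μ y ∨ G.dist μ y + 1 = G.dist μ x := by
  obtain ⟨m, hm, -⟩ := hμ x y
  have hxy1 : G.dist x y = 1 := SimpleGraph.dist_eq_one_iff_adj.mpr hxy
  have h3 := osp_dist hconn hm.2.2
  rw [hxy1] at h3
  rcases (by omega : G.dist x m = 0 ∨ G.dist m y = 0) with h | h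
  · have hxm : x = m := (hconn.dist_eq_zero_iff).mp h
    subst hxm
    have := osp_dist hconn hm.2.1
    rw [hxy1] at this
    left; omega
  · have hmy : m = y := (hconn.dist_eq_zero_iff).mp h
    subst hmy
    have := osp_dist hconn hm.1
    rw [SimpleGraph.dist_comm (u := m) (v := x), hxy1] at this
    right; omega

/-- Let `μ` be a medico vertex of a finite connected graph `G` and let
`c : ZMod n → V` describe an induced cycle `C` in `G` (`n ≥ 3`, `c` injective, consecutive
vertices adjacent, and all adjacencies between cycle vertices are consecutive).  Let
`v = c a` be a vertex of `C` closest to `μ`, with `K = d_G(v,μ)`, let `u = c b` be any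
vertex of `C` and let `i = d_C(u,v)` be the distance along the cycle.  Then
`d_G(μ,u) = K + j` for some `j ≤ i` of the same parity as `i`; in particular
`d_G(μ,u) ∈ {K+1, K+3, …, K+i}` if `i` is odd and `d_G(μ,u) ∈ {K, K+2, …, K+i}`
if `i` is even. -/
theorem stmt3 {V : Type*} [Fintype V] (G : SimpleGraph V) (hconn : G.Connected)
    (μ : V) (hμ : Medico G μ)
    (n : ℕ) (hn : 3 ≤ n) (c : ZMod n → V)
    (hinj : Function.Injective c)
    (hadj : ∀ i : ZMod n, G.Adj (c i) (c (i + 1)))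
    (hind : ∀ i j : ZMod n, G.Adj (c i) (c j) → j = i + 1 ∨ i = j + 1)
    (a b : ZMod n) (K : ℕ) (hK : K = G.dist (c a) μ)
    (hmin : ∀ i : ZMod n, K ≤ G.dist (c i) μ)
    (i : ℕ) (hi : i = min ((b - a).val) ((a - b).val)) :
    ∃ j : ℕ, j ≤ i ∧ j % 2 = i % 2 ∧ G.dist μ (c b) = K + j := by
  haveI : NeZero n := ⟨by omega⟩
  -- distance along the cycle bounds graph distance
  have hwalk : ∀ (k : ℕ) (x : ZMod n), G.dist (c x) (c (x + k)) ≤ k := by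
    intro k
    induction k with
    | zero => intro x; simp
    | succ k ih =>
      intro x
      have h1 : G.dist (c x) (c (x + k)) ≤ k := ih x
      have hcast : x + ((k + 1 : ℕ) : ZMod n) = (x + k) + 1 := by push_cast; ring
      rw [hcast]
      have h2 : G.dist (c (x + k)) (c ((x + k) + 1)) = 1 :=
        SimpleGraph.dist_eq_one_iff_adj.mpr (hadj (x + k))
      have h3 := hconn.dist_triangle (u := c x) (v := c (x + k)) (w := c ((x + k) + 1))
      omega
  -- parity along the cycle
  have hpar : ∀ (k : ℕ), G.dist μ (c (a + k)) % 2 = (K + k) % 2 := by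
    intro k
    induction k with
    | zero =>
      simp [hK, SimpleGraph.dist_comm]
    | succ k ih =>
      have hstep := medico_step hconn hμ (hadj (a + k))
      have : ((k + 1 : ℕ) : ZMod n) = (k : ZMod n) + 1 := by push_cast; ring
      rw [this, ← add_assoc]
      omega
  -- D ≥ K
  set D := G.dist μ (c b) with hD
  have hDK : K ≤ D := by rw [hD, SimpleGraph.dist_comm]; exact hmin b
  -- key facts about the two arc lengths
  have hba : a + ((b - a).val : ZMod n) = b := by rw [ZMod.natCast_zmod_val]; ring
  have hab : b + ((a - b).val : ZMod n) = a := by rw [ZMod.natCast_zmod_val]; ring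
  -- upper bounds
  have hub1 : D ≤ K + (b - a).val := by
    have h1 := hwalk ((b - a).val) a
    rw [hba] at h1
    have h2 := hconn.dist_triangle (u := μ) (v := c a) (w := c b)
    rw [SimpleGraph.dist_comm (u := μ) (v := c a), ← hK] at h2
    omega
  have hub2 : D ≤ K + (a - b).val := by
    have h1 := hwalk ((a - b).val) b
    rw [hab] at h1
    have h2 := hconn.dist_triangle (u := μ) (v := c a) (w := c b)
    rw [SimpleGraph.dist_comm (u := μ) (v := c a), ← hK,
      SimpleGraph.dist_comm (u := c a) (v := c b)] at h2
    omega
  -- parity of D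
  have hpb : D % 2 = (K + (b - a).val) % 2 := by
    have := hpar ((b - a).val)
    rw [hba] at this
    exact this
  -- n is even
  have hneven : n % 2 = 0 := by
    have := hpar n
    rw [show ((n : ℕ) : ZMod n) = 0 from ZMod.natCast_self n, add_zero] at this
    rw [hK, SimpleGraph.dist_comm] at this
    omega
  -- the two arc lengths have the same parity
  have hsum : (b - a).val + (a - b).val = 0 ∨ (b - a).val + (a - b).val = n := by
    have hdvd : n ∣ (b - a).val + (a - b).val := by
      rw [← ZMod.natCast_eq_zero_iff]
      push_cast
      rw [ZMod.natCast_zmod_val, ZMod.natCast_zmod_val]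
      ring
    have l1 : (b - a).val < n := ZMod.val_lt _
    have l2 : (a - b).val < n := ZMod.val_lt _
    rcases hdvd with ⟨t, ht⟩
    have ht2 : t < 2 := by nlinarith
    interval_cases t <;> omega
  refine ⟨D - K, ?_, ?_, by omega⟩ <;> omega
end

section
/- Let G be a finite simple connected graph and μ a median-consistent vertex of G. Then for vertices x, y, z of G the following are equivalent: (1) the quartet (x,z,y,μ) is distance-ℓ-static for some ℓ ≥ 1; (2) there is an induced 4-cycle in G on vertices x, y, z, u with edges {x,y}, {y,z}, {z,u}, {u,x}, where u has strictly minimal distance to μ among x, y, z, u. Moreover, G is μ-meshed: every distance-ℓ-static quartet (x,z,y,μ) admits a common neighbor u of x and z with d(u,μ) = ℓ − 1. -/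
open SimpleGraph

/-- The quartet `(x, z, y, w)` is distance-`ℓ`-static:
`d(x,w) = d(z,w) = ℓ = d(y,w) - 1`, `d(x,z) = 2`, and `y` is a common neighbor
of `x` and `z` (for `ℓ ≥ 1`). -/
def DistLStatic {V : Type*} (G : SimpleGraph V) (x z y w : V) (ℓ : ℕ) : Prop :=
  1 ≤ ℓ ∧ G.dist x w = ℓ ∧ G.dist z w = ℓ ∧ G.dist y w = ℓ + 1 ∧
    G.dist x z = 2 ∧ G.Adj x y ∧ G.Adj y z

/-- `z ∈ I(u,v)` iff `d(u,z) + d(z,v) = d(u,v)` (in a connected graph). -/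
lemma onShortestPath_iff {V : Type*} (G : SimpleGraph V) (hconn : G.Connected)
    (u v z : V) : OnShortestPath G u v z ↔ G.dist u z + G.dist z v = G.dist u v := by
  classical
  constructor
  · rintro ⟨p, hl, hz⟩
    have hspec := p.take_spec hz
    have hlen : (p.takeUntil z hz).length + (p.dropUntil z hz).length = p.length := by
      rw [← Walk.length_append, hspec]
    have h1 : G.dist u z ≤ (p.takeUntil z hz).length := dist_le _
    have h2 : G.dist z v ≤ (p.dropUntil z hz).length := dist_le _
    have h3 : G.dist u v ≤ G.dist u z + G.dist z v := hconn.dist_triangle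
    omega
  · intro h
    obtain ⟨p, hp⟩ := hconn.exists_walk_length_eq_dist u z
    obtain ⟨q, hq⟩ := hconn.exists_walk_length_eq_dist z v
    refine ⟨p.append q, ?_, ?_⟩
    · rw [Walk.length_append, hp, hq, h]
    · rw [Walk.mem_support_append_iff]
      exact Or.inl p.end_mem_support

/-- Adjacent vertices have distinct distances to a medico vertex. -/
lemma medico_adj_dist_ne {V : Type*} (G : SimpleGraph V) (hconn : G.Connected)
    (μ : V) (hμ : Medico G μ) {x y : V} (hxy : G.Adj x y) :
    G.dist x μ ≠ G.dist y μ := by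
  intro heq
  obtain ⟨m, ⟨h1, h2, h3⟩, -⟩ := hμ x y
  rw [onShortestPath_iff G hconn] at h1 h2 h3
  have hxy1 : G.dist x y = 1 := dist_eq_one_iff_adj.mpr hxy
  rw [hxy1] at h3
  have hdμx : G.dist μ x = G.dist x μ := dist_comm
  have hdμy : G.dist μ y = G.dist y μ := dist_comm
  rcases Nat.add_eq_one_iff.mp h3 with ⟨hx0, hy1⟩ | ⟨hx1, hy0⟩
  · have hmx : m = x := (hconn.dist_eq_zero_iff.mp hx0).symm
    subst hmx
    omega
  · have hmy : m = y := hconn.dist_eq_zero_iff.mp hy0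
    subst hmy
    have hyx : G.dist m x = G.dist x m := dist_comm
    omega

/-- The quadrangle property at a medico vertex. -/
lemma medico_quadrangle {V : Type*} (G : SimpleGraph V) (hconn : G.Connected)
    (μ : V) (hμ : Medico G μ) {x z : V} {ℓ : ℕ} (hℓ : 1 ≤ ℓ)
    (hx : G.dist x μ = ℓ) (hz : G.dist z μ = ℓ) (hxz : G.dist x z = 2) :
    ∃ u : V, G.Adj x u ∧ G.Adj u z ∧ G.dist u μ = ℓ - 1 := by
  obtain ⟨m, ⟨h1, h2, h3⟩, -⟩ := hμ x z
  rw [onShortestPath_iff G hconn] at h1 h2 h3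
  have hdμx : G.dist μ x = G.dist x μ := dist_comm
  have hdμz : G.dist μ z = G.dist z μ := dist_comm
  have hdmx : G.dist m x = G.dist x m := dist_comm
  have hdmz : G.dist m z = G.dist z m := dist_comm
  rw [hxz] at h3
  have hmx : G.dist x m = 1 := by omega
  have hmz : G.dist m z = 1 := by omega
  have hdμm : G.dist μ m = ℓ - 1 := by omega
  exact ⟨m, dist_eq_one_iff_adj.mp hmx, dist_eq_one_iff_adj.mp hmz, by
    rw [dist_comm]; exact hdμm⟩

/-- For a medico vertex `μ` of a finite connected graph `G` and vertices
`x, y, z`: `(x,z,y,μ)` is distance-`ℓ`-static for some `ℓ ≥ 1` iff there is an induced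
4-cycle on `x, y, z, u` with edges `{x,y}, {y,z}, {z,u}, {u,x}` where `u` has strictly
minimal distance to `μ` among `x, y, z, u`.  Moreover `G` is `μ`-meshed: every
distance-`ℓ`-static quartet `(x,z,y,μ)` admits a common neighbor `u` of `x` and `z`
with `d(u,μ) = ℓ - 1`. -/
theorem stmt5 {V : Type*} [Fintype V] (G : SimpleGraph V) (hconn : G.Connected)
    (μ : V) (hμ : Medico G μ) :
    (∀ x y z : V,
      (∃ ℓ : ℕ, DistLStatic G x z y μ ℓ) ↔
        ∃ u : V, G.Adj x y ∧ G.Adj y z ∧ G.Adj z u ∧ G.Adj u x ∧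
          ¬ G.Adj x z ∧ ¬ G.Adj y u ∧ x ≠ z ∧ y ≠ u ∧
          G.dist u μ < G.dist x μ ∧ G.dist u μ < G.dist y μ ∧ G.dist u μ < G.dist z μ) ∧
    (∀ (x z y : V) (ℓ : ℕ), DistLStatic G x z y μ ℓ →
      ∃ u : V, G.Adj x u ∧ G.Adj u z ∧ G.dist u μ = ℓ - 1) := by
  constructor
  · intro x y z
    constructor
    · rintro ⟨ℓ, hℓ1, hxμ, hzμ, hyμ, hxz, hxy, hyz⟩
      obtain ⟨u, hxu, huz, huμ⟩ := medico_quadrangle G hconn μ hμ hℓ1 hxμ hzμ hxz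
      refine ⟨u, hxy, hyz, huz.symm, hxu.symm, ?_, ?_, ?_, ?_, ?_, ?_, ?_⟩
      · intro h
        rw [← dist_eq_one_iff_adj] at h
        omega
      · intro h
        have : G.dist y μ ≤ G.dist y u + G.dist u μ := hconn.dist_triangle
        rw [dist_eq_one_iff_adj.mpr h] at this
        omega
      · intro h; subst h; rw [dist_self] at hxz; omega
      · intro h; subst h; omega
      · omega
      · omega
      · omega
    · rintro ⟨u, hxy, hyz, hzu, hux, hnxz, hnyu, hxz, hyu, h1, h2, h3⟩
      set a := G.dist u μ with ha
      have hxμ : G.dist x μ = a + 1 := by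
        have t1 : G.dist x μ ≤ G.dist x u + G.dist u μ := hconn.dist_triangle
        rw [dist_eq_one_iff_adj.mpr hux.symm] at t1
        omega
      have hzμ : G.dist z μ = a + 1 := by
        have t1 : G.dist z μ ≤ G.dist z u + G.dist u μ := hconn.dist_triangle
        rw [dist_eq_one_iff_adj.mpr hzu] at t1
        omega
      have hyμ : G.dist y μ = a + 2 := by
        have t1 : G.dist y μ ≤ G.dist y x + G.dist x μ := hconn.dist_triangle
        rw [dist_eq_one_iff_adj.mpr hxy.symm] at t1
        have t2 : G.dist x μ ≤ G.dist x y + G.dist y μ := hconn.dist_triangle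
        rw [dist_eq_one_iff_adj.mpr hxy] at t2
        have hne := medico_adj_dist_ne G hconn μ hμ hxy
        omega
      have hdxz : G.dist x z = 2 := by
        have t1 : G.dist x z ≤ G.dist x y + G.dist y z := hconn.dist_triangle
        rw [dist_eq_one_iff_adj.mpr hxy, dist_eq_one_iff_adj.mpr hyz] at t1
        have h0 : G.dist x z ≠ 0 := fun h => hxz (hconn.dist_eq_zero_iff.mp h)
        have h1' : G.dist x z ≠ 1 := fun h => hnxz (dist_eq_one_iff_adj.mp h)
        omega
      exact ⟨a + 1, le_add_self, hxμ, hzμ, by omega, hdxz, hxy, hyz⟩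
  · rintro x z y ℓ ⟨hℓ1, hxμ, hzμ, hyμ, hxz, hxy, hyz⟩
    exact medico_quadrangle G hconn μ hμ hℓ1 hxμ hzμ hxz
end

section
/- Let G be a finite simple connected graph with a median-consistent vertex μ, and let C be a cycle in G. Then there exist edges {x,y} and {y,z} of C such that the quartet (x,z,y,μ) is distance-ℓ-static for some ℓ ≥ 1. -/
open SimpleGraph

/-- In a graph with a medico vertex `μ`, no edge has both endpoints
equidistant from `μ`. -/
lemma noeq {V : Type*} {G : SimpleGraph V} (hconn : G.Connected) {μ : V}
    (hμ : Medico G μ) {a b : V} (hab : G.Adj a b) : G.dist μ a ≠ G.dist μ b := by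
  intro he
  obtain ⟨m, ⟨h1, h2, h3⟩, -⟩ := hμ a b
  have e1 := osp_dist hconn h1
  have e2 := osp_dist hconn h2
  have e3 := osp_dist hconn h3
  have hab1 : G.dist a b = 1 := SimpleGraph.dist_eq_one_iff_adj.mpr hab
  have h0 : G.dist a m = 0 ∨ G.dist m b = 0 := by omega
  rcases h0 with h0 | h0
  · have hma : m = a := (hconn.dist_eq_zero_iff.mp h0).symm
    rw [hma] at e2
    omega
  · have hmb : m = b := hconn.dist_eq_zero_iff.mp h0
    rw [hmb] at e1
    have hc : G.dist b a = G.dist a b := G.dist_comm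
    omega

/-- If `μ` is a medico vertex of a finite connected graph `G` and
`c : ZMod n → V` describes a cycle in `G` (`n ≥ 3`, `c` injective, consecutive vertices
adjacent), then there are two consecutive edges `{x,y}, {y,z}` of the cycle such that
`(x, z, y, μ)` is distance-`ℓ`-static for some `ℓ ≥ 1`. -/
theorem stmt6 {V : Type*} [Fintype V] (G : SimpleGraph V) (hconn : G.Connected)
    (μ : V) (hμ : Medico G μ)
    (n : ℕ) (hn : 3 ≤ n) (c : ZMod n → V)
    (hinj : Function.Injective c)
    (hadj : ∀ i : ZMod n, G.Adj (c i) (c (i + 1))) :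
    ∃ (i : ZMod n) (ℓ : ℕ), DistLStatic G (c i) (c (i + 2)) (c (i + 1)) μ ℓ := by
  haveI : NeZero n := ⟨by omega⟩
  set f : ZMod n → ℕ := fun i => G.dist μ (c i) with hf
  -- along each edge of the cycle, the distance to μ changes by exactly one
  have step : ∀ j : ZMod n, f (j + 1) + 1 = f j ∨ f j + 1 = f (j + 1) := by
    intro j
    have hne : f j ≠ f (j + 1) := noeq hconn hμ (hadj j)
    have hd1 : G.dist (c j) (c (j + 1)) = 1 := SimpleGraph.dist_eq_one_iff_adj.mpr (hadj j)
    have hd1' : G.dist (c (j + 1)) (c j) = 1 := by rwa [G.dist_comm] at hd1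
    have t1 := hconn.dist_triangle (u := μ) (v := c j) (w := c (j + 1))
    have t2 := hconn.dist_triangle (u := μ) (v := c (j + 1)) (w := c j)
    simp only [hf] at *
    omega
  obtain ⟨i, hi⟩ := Finite.exists_max f
  have e1 : i - 1 + 1 = i := by ring
  have e2 : i - 1 + 2 = i + 1 := by ring
  have h2n : (2 : ZMod n) ≠ 0 := by
    intro h2
    have : n ∣ 2 := (ZMod.natCast_eq_zero_iff 2 n).mp (by exact_mod_cast h2)
    have := Nat.le_of_dvd (by norm_num) this
    omega
  have hneidx : i - 1 ≠ i + 1 := by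
    intro h
    apply h2n
    linear_combination -h
  -- both neighbors of the maximum are strictly closer to μ
  have hprev : f (i - 1) + 1 = f i := by
    have := step (i - 1)
    rw [e1] at this
    have := this
    have h' := hi (i - 1)
    omega
  have hnext : f (i + 1) + 1 = f i := by
    have := step i
    have h' := hi (i + 1)
    omega
  -- the maximum distance is at least 2
  have hM2 : 2 ≤ f i := by
    by_contra h
    have hp0 : f (i - 1) = 0 := by omega
    have hn0 : f (i + 1) = 0 := by omega
    have ha : μ = c (i - 1) := hconn.dist_eq_zero_iff.mp hp0
    have hb : μ = c (i + 1) := hconn.dist_eq_zero_iff.mp hn0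
    exact hneidx (hinj (ha ▸ hb ▸ rfl))
  -- the two neighbors are nonadjacent (equidistant from μ), hence at distance 2
  have hprevadj : G.Adj (c (i - 1)) (c i) := by have := hadj (i - 1); rwa [e1] at this
  have hnadj : ¬ G.Adj (c (i - 1)) (c (i + 1)) := by
    intro h
    exact noeq hconn hμ h (by simp only [hf] at hprev hnext; omega)
  have hnev : c (i - 1) ≠ c (i + 1) := fun h => hneidx (hinj h)
  have hdle : G.dist (c (i - 1)) (c (i + 1)) ≤ 2 := by
    have := SimpleGraph.dist_le
      (SimpleGraph.Walk.cons hprevadj (SimpleGraph.Walk.cons (hadj i) SimpleGraph.Walk.nil))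
    simpa using this
  have hd2 : G.dist (c (i - 1)) (c (i + 1)) = 2 := by
    have h0 : G.dist (c (i - 1)) (c (i + 1)) ≠ 0 := fun h =>
      hnev (hconn.dist_eq_zero_iff.mp h)
    have h1 : G.dist (c (i - 1)) (c (i + 1)) ≠ 1 := fun h =>
      hnadj (SimpleGraph.dist_eq_one_iff_adj.mp h)
    omega
  simp only [hf] at hprev hnext hM2
  refine ⟨i - 1, G.dist μ (c i) - 1, ?_, ?_, ?_, ?_, ?_, ?_, ?_⟩
  · omega
  · rw [G.dist_comm]; omega
  · rw [e2, G.dist_comm]; omega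
  · rw [e1, G.dist_comm]; omega
  · rwa [e2]
  · rwa [e1]
  · rw [e1, e2]; exact hadj i
end

section
/- Let G be a finite simple connected graph, μ a median-consistent vertex of G, and H a μ-convex subgraph of G. Then H is an isometric subgraph of G (d_H(x,y) = d_G(x,y) for all x,y ∈ V(H)), μ is a median-consistent vertex of H, and the unique median in H of μ, x, y equals the unique median in G of μ, x, y for all x,y ∈ V(H). -/
/-!
Let `x, y ∈ H` and let `m` be the median of `μ, x, y` in `G`. The geodesics from `μ` to `x`
and to `y` through `m` lie in `H` by `μ`-convexity, and since `m ∈ I(x, y)` their tails from `m`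
glue to an `x`–`y` geodesic of `G` inside `H`. Hence `H` is isometric, so geodesics of `H` are
geodesics of `G` and every median in `H` is a median in `G`; conversely the median in `G` lies on
the lifted geodesics, so it is a median in `H`, and uniqueness in `G` gives uniqueness in `H`.
-/

open SimpleGraph

/-- A subgraph `H` of `G` is `v`-convex: `v ∈ V(H)` and every shortest path in `G`
connecting `v` and a vertex `x` of `H` is contained in `H`. -/
def VConvex {V : Type*} (G : SimpleGraph V) (H : G.Subgraph) (v : V) : Prop :=
  v ∈ H.verts ∧
    ∀ x ∈ H.verts, ∀ p : G.Walk v x, p.length = G.dist v x → p.toSubgraph ≤ H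

namespace SimpleGraph

variable {V W : Type*} {G : SimpleGraph V}

lemma Reachable.dist_map_le {G' : SimpleGraph W} (f : G →g G') {u v : V}
    (h : G.Reachable u v) : G'.dist (f u) (f v) ≤ G.dist u v := by
  obtain ⟨p, hp⟩ := h.exists_walk_length_eq_dist
  rw [← hp, ← p.length_map f]
  exact G'.dist_le _

namespace Walk

variable {u v w : V}

lemma toSubgraph_dropUntil_le [DecidableEq V] (p : G.Walk u v) (h : w ∈ p.support) :
    (p.dropUntil w h).toSubgraph ≤ p.toSubgraph := by
  conv_rhs => rw [← p.take_spec h, toSubgraph_append]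
  exact le_sup_right

lemma dist_add_dist_of_mem_support {p : G.Walk u v} (hp : p.length = G.dist u v)
    (h : w ∈ p.support) : G.dist u w + G.dist w v = G.dist u v := by
  classical
  rw [← length_eq_dist_of_subwalk hp (p.isSubwalk_takeUntil h),
    ← length_eq_dist_of_subwalk hp (p.isSubwalk_dropUntil h), ← length_append, take_spec, hp]

end Walk

namespace Subgraph

variable {H : G.Subgraph}

lemma exists_walk_map_hom_eq {x y : H.verts} (p : G.Walk x y) (hp : p.toSubgraph ≤ H) :
    ∃ q : H.coe.Walk x y, q.map H.hom = p :=
  ⟨p.mapToSubgraph.map (Subgraph.inclusion hp),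
    (Walk.map_map _ _ _).trans p.map_mapToSubgraph_hom⟩

lemma coe_dist_eq_of_walk {x y : H.verts} (p : G.Walk x y) (hp : p.length = G.dist x y)
    (hpH : p.toSubgraph ≤ H) : H.coe.dist x y = G.dist x y := by
  obtain ⟨q, hq⟩ := exists_walk_map_hom_eq p hpH
  have hlen : q.length = p.length := (Walk.length_map _ _).symm.trans (congrArg Walk.length hq)
  exact le_antisymm (hp ▸ hlen ▸ H.coe.dist_le q) (q.reachable.dist_map_le H.hom)

end Subgraph

end SimpleGraph

section

variable {V : Type*} {G : SimpleGraph V} {H : G.Subgraph}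

lemma OnShortestPath.coe_of_walk {x y m : H.verts} (p : G.Walk x y)
    (hp : p.length = G.dist x y) (hpH : p.toSubgraph ≤ H) (hm : (m : V) ∈ p.support) :
    OnShortestPath H.coe x y m := by
  obtain ⟨q, hq⟩ := Subgraph.exists_walk_map_hom_eq p hpH
  refine ⟨q, ?_, ?_⟩
  · rw [Subgraph.coe_dist_eq_of_walk p hp hpH, ← hp]
    exact (Walk.length_map _ _).symm.trans (congrArg Walk.length hq)
  · have := (Walk.support_map H.hom q).symm.trans (congrArg Walk.support hq) ▸ hm
    obtain ⟨a, ha, hav⟩ := List.mem_map.1 this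
    rwa [← Subtype.ext hav]

lemma OnShortestPath.of_coe {x y m : H.verts} (h : OnShortestPath H.coe x y m)
    (hxy : H.coe.dist x y = G.dist x y) : OnShortestPath G x y m := by
  obtain ⟨q, hq, hm⟩ := h
  exact ⟨q.map H.hom, (Walk.length_map _ _).trans (hq.trans hxy),
    (Walk.support_map H.hom q).symm ▸ List.mem_map_of_mem hm⟩

lemma IsMedianPt.of_coe {u v w m : H.verts} (h : IsMedianPt H.coe u v w m)
    (hiso : ∀ x y : H.verts, H.coe.dist x y = G.dist x y) : IsMedianPt G u v w m :=
  ⟨h.1.of_coe (hiso u v), h.2.1.of_coe (hiso u w), h.2.2.of_coe (hiso v w)⟩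

end

namespace VConvex

variable {V : Type*} {G : SimpleGraph V} {H : G.Subgraph} {μ : V}

lemma exists_geodesic_through_median (hH : VConvex G H μ) {x y m : V} (hx : x ∈ H.verts)
    (hy : y ∈ H.verts) (hm : IsMedianPt G μ x y m) :
    ∃ p : G.Walk x y, p.length = G.dist x y ∧ m ∈ p.support ∧ p.toSubgraph ≤ H := by
  classical
  obtain ⟨⟨px, hpx, hmx⟩, ⟨py, hpy, hmy⟩, ⟨pxy, hpxy, hmxy⟩⟩ := hm
  let a := (px.dropUntil m hmx).reverse
  let b := py.dropUntil m hmy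
  refine ⟨a.append b, ?_, (a.mem_support_append_iff b).2 (Or.inr b.start_mem_support), ?_⟩
  · have ha : a.length = G.dist x m := by
      rw [Walk.length_reverse, length_eq_dist_of_subwalk hpx (px.isSubwalk_dropUntil hmx),
        SimpleGraph.dist_comm]
    have hb : b.length = G.dist m y :=
      length_eq_dist_of_subwalk hpy (py.isSubwalk_dropUntil hmy)
    rw [Walk.length_append, ha, hb, Walk.dist_add_dist_of_mem_support hpxy hmxy]
  · rw [Walk.toSubgraph_append, Walk.toSubgraph_reverse]
    exact sup_le ((px.toSubgraph_dropUntil_le hmx).trans (hH.2 x hx px hpx))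
      ((py.toSubgraph_dropUntil_le hmy).trans (hH.2 y hy py hpy))

lemma coe_dist_eq (hH : VConvex G H μ) (hμ : Medico G μ) (x y : H.verts) :
    H.coe.dist x y = G.dist x y := by
  obtain ⟨m, hm, -⟩ := hμ x y
  obtain ⟨p, hp, -, hpH⟩ := hH.exists_geodesic_through_median x.2 y.2 hm
  exact Subgraph.coe_dist_eq_of_walk p hp hpH

lemma exists_isMedianPt_coe (hH : VConvex G H μ) {x y : H.verts} {m : V}
    (hm : IsMedianPt G μ x y m) :
    ∃ hmH : m ∈ H.verts, IsMedianPt H.coe ⟨μ, hH.1⟩ x y ⟨m, hmH⟩ := by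
  obtain ⟨p, hp, hmp, hpH⟩ := hH.exists_geodesic_through_median x.2 y.2 hm
  have hmH : m ∈ H.verts := Subgraph.verts_mono hpH (p.mem_verts_toSubgraph.2 hmp)
  obtain ⟨⟨px, hpx, hmx⟩, ⟨py, hpy, hmy⟩, -⟩ := hm
  exact ⟨hmH, .coe_of_walk px hpx (hH.2 x x.2 px hpx) hmx,
    .coe_of_walk py hpy (hH.2 y y.2 py hpy) hmy, .coe_of_walk p hp hpH hmp⟩

end VConvex

theorem stmt13_general {V : Type*} (G : SimpleGraph V)
    (μ : V) (hμ : Medico G μ) (H : G.Subgraph) (hH : VConvex G H μ) :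
    (∀ x y : H.verts, H.coe.dist x y = G.dist (x : V) (y : V)) ∧
    (∀ v w : H.verts, ∃! m : H.verts, IsMedianPt H.coe ⟨μ, hH.1⟩ v w m) ∧
    (∀ x y m : H.verts, IsMedianPt H.coe ⟨μ, hH.1⟩ x y m →
      IsMedianPt G μ (x : V) (y : V) (m : V)) := by
  have hiso := hH.coe_dist_eq hμ
  refine ⟨hiso, fun v w => ?_, fun x y m hm => hm.of_coe hiso⟩
  obtain ⟨m, hm, huniq⟩ := hμ v w
  obtain ⟨hmH, hmH'⟩ := hH.exists_isMedianPt_coe hm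
  exact ⟨⟨m, hmH⟩, hmH', fun m' hm' => Subtype.ext (huniq m' (hm'.of_coe hiso))⟩

/-- Let `μ` be a medico vertex of a finite connected graph `G` and let
`H` be a `μ`-convex subgraph of `G`.  Then `H` is an isometric subgraph of `G`, `μ` is a
medico vertex of `H`, and medians of `μ, x, y` taken in `H` agree with those taken in `G`
for all vertices `x, y` of `H`. -/
theorem stmt13 {V : Type*} [Fintype V] (G : SimpleGraph V) (hconn : G.Connected)
    (μ : V) (hμ : Medico G μ) (H : G.Subgraph) (hH : VConvex G H μ) :
    (∀ x y : H.verts, H.coe.dist x y = G.dist (x : V) (y : V)) ∧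
    (∀ v w : H.verts, ∃! m : H.verts, IsMedianPt H.coe ⟨μ, hH.1⟩ v w m) ∧
    (∀ x y m : H.verts, IsMedianPt H.coe ⟨μ, hH.1⟩ x y m →
      IsMedianPt G μ (x : V) (y : V) (m : V)) :=
  stmt13_general G μ hμ H hH
end

section
/- Let G be a finite simple connected graph and v a vertex such that G satisfies condition (C1) with respect to v. Then d(v,a) ≠ d(v,b) for every edge {a,b} of G, and consequently G is bipartite. -/
open SimpleGraph

/-- Condition (C1) with respect to `u`: for all vertices `v, w`, the subgraph of `G`
induced by `I(u,v,w) = I(u,v) ∩ I(u,w) ∩ I(v,w)` is nonempty and connected. -/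
def SatC1 {V : Type*} (G : SimpleGraph V) (u : V) : Prop :=
  ∀ v w : V, (G.induce {m : V | IsMedianPt G u v w m}).Connected

lemma osp_dist_add {V : Type*} {G : SimpleGraph V} (hconn : G.Connected) {u w z : V}
    (hz : OnShortestPath G u w z) : G.dist u z + G.dist z w = G.dist u w := by
  classical
  obtain ⟨p, hlen, hmem⟩ := hz
  have hspec := p.take_spec hmem
  have hlens : (p.takeUntil z hmem).length + (p.dropUntil z hmem).length = p.length := by
    conv_rhs => rw [← hspec]
    exact (Walk.length_append _ _).symm
  have h1 : G.dist u z ≤ (p.takeUntil z hmem).length := SimpleGraph.dist_le _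
  have h2 : G.dist z w ≤ (p.dropUntil z hmem).length := SimpleGraph.dist_le _
  have h3 : G.dist u w ≤ G.dist u z + G.dist z w := hconn.dist_triangle
  omega

/-- If a finite connected graph `G` satisfies (C1) with respect to some
vertex `v`, then `d(v,a) ≠ d(v,b)` for every edge `{a,b}` of `G`, and consequently `G`
is bipartite. -/
theorem stmt15 {V : Type*} [Fintype V] (G : SimpleGraph V) (hconn : G.Connected)
    (v : V) (h : SatC1 G v) :
    (∀ a b : V, G.Adj a b → G.dist v a ≠ G.dist v b) ∧ G.Colorable 2 := by
  have key : ∀ a b : V, G.Adj a b → G.dist v a ≠ G.dist v b := by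
    intro a b hab heq
    have hab1 : G.dist a b = 1 := (SimpleGraph.dist_eq_one_iff_adj).mpr hab
    obtain ⟨⟨m, hm⟩⟩ := (h a b).nonempty
    obtain ⟨hva, hvb, habm⟩ := hm
    have h1 := osp_dist_add hconn hva
    have h2 := osp_dist_add hconn hvb
    have h3 := osp_dist_add hconn habm
    rw [hab1] at h3
    have : G.dist a m = 0 ∨ G.dist m b = 0 := by omega
    rcases this with h0 | h0
    · have hma : m = a := (hconn.dist_eq_zero_iff.mp h0).symm
      subst hma
      rw [hab1] at h2
      omega
    · have hmb : m = b := hconn.dist_eq_zero_iff.mp h0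
      subst hmb
      rw [SimpleGraph.dist_comm] at hab1
      omega
  refine ⟨key, ?_⟩
  refine ⟨SimpleGraph.Coloring.mk (fun a => ⟨G.dist v a % 2, Nat.mod_lt _ (by norm_num)⟩) ?_⟩
  intro a b hab hcol
  have hne := key a b hab
  have h1 : G.dist v a ≤ G.dist v b + G.dist b a := hconn.dist_triangle
  have h2 : G.dist v b ≤ G.dist v a + G.dist a b := hconn.dist_triangle
  rw [(SimpleGraph.dist_eq_one_iff_adj).mpr hab] at h2
  rw [(SimpleGraph.dist_eq_one_iff_adj).mpr hab.symm] at h1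
  have : G.dist v a % 2 = G.dist v b % 2 := congrArg Fin.val hcol
  omega
end

section
/- Let G be a finite simple connected graph and μ ∈ V(G). Then μ is a median-consistent vertex of G if and only if G satisfies condition (C1) with respect to μ. Consequently, G is a k-median graph if and only if G satisfies (C1) with respect to k distinct vertices μ_1, …, μ_k, and in that case μ_1, …, μ_k are median-consistent vertices of G; in particular, G is a median graph if and only if G satisfies (C1) with respect to all of its vertices. -/
open SimpleGraph

lemma exists_adj_of_ne {W : Type*} {H : SimpleGraph W} {a b : W}
    (h : H.Reachable a b) (hne : a ≠ b) : ∃ c, H.Adj a c := by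
  obtain ⟨p⟩ := h
  cases p with
  | nil => exact absurd rfl hne
  | cons h _ => exact ⟨_, h⟩

lemma onsp_iff {V : Type*} {G : SimpleGraph V} (hconn : G.Connected) (u v z : V) :
    OnShortestPath G u v z ↔ G.dist u z + G.dist z v = G.dist u v := by
  classical
  constructor
  · rintro ⟨p, hl, hz⟩
    have h1 : G.dist u z ≤ (p.takeUntil z hz).length := dist_le _
    have h2 : G.dist z v ≤ (p.dropUntil z hz).length := dist_le _
    have h3 : (p.takeUntil z hz).length + (p.dropUntil z hz).length = p.length := by
      have := congr_arg SimpleGraph.Walk.length (p.take_spec hz)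
      rwa [SimpleGraph.Walk.length_append] at this
    have h4 : G.dist u v ≤ G.dist u z + G.dist z v := hconn.dist_triangle
    omega
  · intro h
    obtain ⟨p1, hp1⟩ := hconn.exists_walk_length_eq_dist u z
    obtain ⟨p2, hp2⟩ := hconn.exists_walk_length_eq_dist z v
    refine ⟨p1.append p2, ?_, ?_⟩
    · have h4 : G.dist u v ≤ (p1.append p2).length := dist_le _
      rw [SimpleGraph.Walk.length_append] at *
      omega
    · rw [SimpleGraph.Walk.mem_support_append_iff]
      exact Or.inl (SimpleGraph.Walk.end_mem_support p1)

lemma no_adj_medians {V : Type*} {G : SimpleGraph V} (hconn : G.Connected) {μ v w p q : V}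
    (hC : SatC1 G μ) (hp : IsMedianPt G μ v w p) (hq : IsMedianPt G μ v w q)
    (hadj : G.Adj p q) : False := by
  simp only [IsMedianPt, onsp_iff hconn] at hp hq
  have hpq : G.dist p q = 1 := dist_eq_one_iff_adj.mpr hadj
  have hμ : G.dist μ p = G.dist μ q := by
    have h1 := hp.1; have h2 := hp.2.1; have h3 := hp.2.2
    have h4 := hq.1; have h5 := hq.2.1; have h6 := hq.2.2
    have c1 : G.dist v p = G.dist p v := SimpleGraph.dist_comm
    have c2 : G.dist v q = G.dist q v := SimpleGraph.dist_comm
    omega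
  obtain ⟨⟨x, hx⟩⟩ := (hC p q).nonempty
  simp only [Set.mem_setOf_eq, IsMedianPt, onsp_iff hconn] at hx
  obtain ⟨hx1, hx2, hx3⟩ := hx
  rw [hpq] at hx3
  rcases Nat.add_eq_one_iff.mp hx3 with ⟨h0, _⟩ | ⟨_, h0⟩
  · -- dist p x = 0, so x = p
    have : p = x := (hconn.dist_eq_zero_iff).mp h0
    subst this
    -- hx2 : dist μ p + dist p q = dist μ q
    omega
  · have : x = q := (hconn.dist_eq_zero_iff).mp h0
    subst this
    have c1 : G.dist x p = G.dist p x := SimpleGraph.dist_comm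
    omega

lemma medico_iff_satC1 {V : Type*} {G : SimpleGraph V} (hconn : G.Connected) (μ : V) :
    Medico G μ ↔ SatC1 G μ := by
  constructor
  · intro h v w
    obtain ⟨m, hm, huniq⟩ := h v w
    rw [connected_iff]
    refine ⟨?_, ⟨⟨m, hm⟩⟩⟩
    rintro ⟨a, ha⟩ ⟨b, hb⟩
    have : (⟨a, ha⟩ : {m : V | IsMedianPt G μ v w m}) = ⟨b, hb⟩ := by
      have := (huniq a ha).trans (huniq b hb).symm
      simp [this]
    rw [this]
  · intro h v w
    obtain ⟨⟨m, hm⟩⟩ := (h v w).nonempty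
    refine ⟨m, hm, ?_⟩
    intro m' hm'
    by_contra hne
    have hr := (h v w).preconnected ⟨m', hm'⟩ ⟨m, hm⟩
    obtain ⟨c, hadj⟩ := exists_adj_of_ne hr (fun he => hne (congrArg Subtype.val he))
    have hadj' : G.Adj m' c.val := hadj
    exact no_adj_medians hconn h hm' c.2 hadj' 

/-- For a finite connected graph `G`: a vertex `μ` is medico iff `G`
satisfies (C1) with respect to `μ`.  Consequently `G` has at least `k` medico vertices
iff `G` satisfies (C1) with respect to `k` distinct vertices (which then are medico
vertices), and `G` is a median graph iff `G` satisfies (C1) with respect to all of its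
vertices. -/
theorem stmt16 {V : Type*} [Fintype V] (G : SimpleGraph V) (hconn : G.Connected) :
    (∀ μ : V, Medico G μ ↔ SatC1 G μ) ∧
    (∀ k : ℕ,
      (∃ S : Finset V, k ≤ S.card ∧ ∀ μ ∈ S, Medico G μ) ↔
      (∃ S : Finset V, k ≤ S.card ∧ ∀ μ ∈ S, SatC1 G μ)) ∧
    ((∀ u v w : V, ∃! m : V, IsMedianPt G u v w m) ↔ ∀ v : V, SatC1 G v) := by
  have key := medico_iff_satC1 hconn
  refine ⟨key, ?_, ?_⟩
  · intro k
    constructor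
    · rintro ⟨S, hk, hS⟩; exact ⟨S, hk, fun μ hμ => (key μ).mp (hS μ hμ)⟩
    · rintro ⟨S, hk, hS⟩; exact ⟨S, hk, fun μ hμ => (key μ).mpr (hS μ hμ)⟩
  · constructor
    · intro h v; exact (key v).mp (fun a b => h v a b)
    · intro h u v w; exact (key u).mpr (h u) v w
end

section
/- Let G be a finite simple connected graph. For vertices x,y let G(x,y) denote the subgraph of G whose vertex set is I(x,y) and whose edge set consists exactly of the edges lying on some shortest x–y path, and set G(u,v,w) := G(u,v) ∩ G(u,w) ∩ G(v,w) (intersection of vertex sets and of edge sets). Then G is a median graph if and only if, for all vertices u,v,w, the graph G(u,v,w) is nonempty and connected. -/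
open SimpleGraph

/-- The edge `{a,b}` lies on some shortest path connecting `x` and `y` in `G`. -/
def EdgeOnShortest {V : Type*} (G : SimpleGraph V) (x y a b : V) : Prop :=
  ∃ p : G.Walk x y, p.length = G.dist x y ∧ s(a, b) ∈ p.edges

/-- The graph `G(u,v,w) = G(u,v) ∩ G(u,w) ∩ G(v,w)`: its vertices are the vertices of
`I(u,v) ∩ I(u,w) ∩ I(v,w)`, and two of them are adjacent iff the edge between them lies
on some shortest path for each of the three pairs. -/
def TripleGraph {V : Type*} (G : SimpleGraph V) (u v w : V) :
    SimpleGraph {m : V // IsMedianPt G u v w m} :=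
  SimpleGraph.fromRel fun a b =>
    EdgeOnShortest G u v (a : V) (b : V) ∧ EdgeOnShortest G u w (a : V) (b : V) ∧
      EdgeOnShortest G v w (a : V) (b : V)

private lemma supp_dist {V : Type*} {G : SimpleGraph V} (hc : G.Connected) {x y z : V}
    (p : G.Walk x y) (hp : p.length = G.dist x y) (hz : z ∈ p.support) :
    G.dist x z + G.dist z y = G.dist x y := by
  classical
  have h1 : G.dist x z ≤ (p.takeUntil z hz).length := SimpleGraph.dist_le _
  have h2 : G.dist z y ≤ (p.dropUntil z hz).length := SimpleGraph.dist_le _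
  have h3 : (p.takeUntil z hz).length + (p.dropUntil z hz).length = p.length := by
    rw [← SimpleGraph.Walk.length_append, SimpleGraph.Walk.take_spec]
  have h4 := hc.dist_triangle (u := x) (v := z) (w := y)
  omega

private lemma dart_split {V : Type*} {G : SimpleGraph V} :
    ∀ {x y : V} (p : G.Walk x y) (d : G.Dart), d ∈ p.darts →
      ∃ (q : G.Walk x d.fst) (r : G.Walk d.snd y), q.length + 1 + r.length = p.length := by
  intro x y p
  induction p with
  | nil => intro d hd; simp at hd
  | cons h p ih =>
    intro d hd
    rw [SimpleGraph.Walk.darts_cons, List.mem_cons] at hd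
    rcases hd with hd | hd
    · subst hd
      exact ⟨SimpleGraph.Walk.nil, p, by simp [Nat.add_comm]⟩
    · obtain ⟨q, r, hqr⟩ := ih d hd
      exact ⟨SimpleGraph.Walk.cons h q, r, by simp [SimpleGraph.Walk.length_cons]; omega⟩

private lemma edge_dist {V : Type*} {G : SimpleGraph V} (hc : G.Connected) {x y a b : V}
    (h : EdgeOnShortest G x y a b) :
    G.dist x a + 1 = G.dist x b ∨ G.dist x b + 1 = G.dist x a := by
  obtain ⟨p, hp, he⟩ := h
  have hsa : a ∈ p.support := SimpleGraph.Walk.fst_mem_support_of_mem_edges p he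
  have hsb : b ∈ p.support := SimpleGraph.Walk.snd_mem_support_of_mem_edges p he
  have ea := supp_dist hc p hp hsa
  have eb := supp_dist hc p hp hsb
  rw [SimpleGraph.Walk.edges, List.mem_map] at he
  obtain ⟨d, hd, hde⟩ := he
  obtain ⟨q, r, hqr⟩ := dart_split p d hd
  have h1 : G.dist x d.fst ≤ q.length := SimpleGraph.dist_le _
  have h2 : G.dist d.snd y ≤ r.length := SimpleGraph.dist_le _
  have h3 : G.dist d.fst d.snd ≤ 1 := by
    have := SimpleGraph.dist_le (SimpleGraph.Walk.cons d.adj SimpleGraph.Walk.nil)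
    simpa using this
  have h4 := hc.dist_triangle (u := x) (v := d.fst) (w := d.snd)
  have h5 : s(d.fst, d.snd) = s(a, b) := hde
  rw [Sym2.eq_iff] at h5
  have efst := supp_dist hc p hp (SimpleGraph.Walk.dart_fst_mem_support_of_mem_darts p hd)
  have esnd := supp_dist hc p hp (SimpleGraph.Walk.dart_snd_mem_support_of_mem_darts p hd)
  rcases h5 with ⟨h5, h6⟩ | ⟨h5, h6⟩ <;> subst h5 <;> subst h6 <;> omega

private lemma no_triple_edge {V : Type*} {G : SimpleGraph V} (hc : G.Connected)
    {u v w a b : V} (ha : IsMedianPt G u v w a) (hb : IsMedianPt G u v w b)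
    (h1 : EdgeOnShortest G u v a b) : False := by
  obtain ⟨⟨p1, hp1, hz1⟩, ⟨p2, hp2, hz2⟩, ⟨p3, hp3, hz3⟩⟩ := ha
  obtain ⟨⟨q1, hq1, hw1⟩, ⟨q2, hq2, hw2⟩, ⟨q3, hq3, hw3⟩⟩ := hb
  have E1 := supp_dist hc p1 hp1 hz1
  have E2 := supp_dist hc p2 hp2 hz2
  have E3 := supp_dist hc p3 hp3 hz3
  have F1 := supp_dist hc q1 hq1 hw1
  have F2 := supp_dist hc q2 hq2 hw2
  have F3 := supp_dist hc q3 hq3 hw3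
  have hE := edge_dist hc h1
  have c1 : G.dist a v = G.dist v a := G.dist_comm ..
  have c2 : G.dist b v = G.dist v b := G.dist_comm ..
  omega

/-- A finite connected graph `G` is a median graph iff for all vertices
`u, v, w` the graph `G(u,v,w)` is nonempty and connected. -/
theorem stmt18 {V : Type*} [Fintype V] (G : SimpleGraph V) (hconn : G.Connected) :
    (∀ u v w : V, ∃! m : V, IsMedianPt G u v w m) ↔
      ∀ u v w : V, (TripleGraph G u v w).Connected := by
  constructor
  · intro h u v w
    obtain ⟨m, hm, huniq⟩ := h u v w
    haveI : Nonempty {m : V // IsMedianPt G u v w m} := ⟨⟨m, hm⟩⟩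
    refine SimpleGraph.Connected.mk fun a b => ?_
    have hab : a = b := Subtype.ext ((huniq a.1 a.2).trans (huniq b.1 b.2).symm)
    rw [hab]
  · intro h u v w
    have hpre := (h u v w).preconnected
    obtain ⟨a⟩ := (h u v w).nonempty
    refine ⟨a.1, a.2, fun m hm => ?_⟩
    obtain ⟨pw⟩ := hpre ⟨m, hm⟩ a
    have key : ∀ (x y : {m : V // IsMedianPt G u v w m}),
        (TripleGraph G u v w).Walk x y → x.1 = y.1 := by
      intro x y p
      induction p with
      | nil => rfl
      | cons hadj p ih =>
        exfalso
        rw [TripleGraph, SimpleGraph.fromRel_adj] at hadj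
        rcases hadj.2 with ⟨he, _⟩ | ⟨he, _⟩
        · exact no_triple_edge hconn (by exact _root_.Subtype.prop _) (by exact _root_.Subtype.prop _) he
        · exact no_triple_edge hconn (by exact _root_.Subtype.prop _) (by exact _root_.Subtype.prop _) he
    exact key ⟨m, hm⟩ a pw
end

section
/- Let G be a finite simple connected modular graph with at least one median-consistent vertex. Then every convex subgraph H of G has a median-consistent vertex, i.e., there exists v ∈ V(H) with |I_H(v,x,y)| = 1 for all x,y ∈ V(H). -/
open SimpleGraph

/-
Let `μ` be a medico vertex of `G` and `v` a vertex of `H` closest to `μ`. Modularity applied to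
`μ, v, a` gives a median in `I(v, a) ⊆ H`, which by minimality must be `v`; hence `v` is a gate:
`d(μ, a) = d(μ, v) + d(v, a)` for every `a ∈ H`. For `a, z ∈ H` this makes `z ∈ I(v, a)`
equivalent to `z ∈ I(μ, a)`, and convexity makes intervals and distances of `H` those of `G`.
So `I_H(v, x, y) = I_G(μ, x, y) ∩ H`, and the unique element of `I_G(μ, x, y)` lies in
`I(x, y) ⊆ H`.
-/

namespace SimpleGraph

variable {V : Type*} {G : SimpleGraph V}

def IsModular (G : SimpleGraph V) : Prop :=
  ∀ u v w : V, ∃ m : V, IsMedianPt G u v w m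

def Subgraph.IsConvex (H : G.Subgraph) : Prop :=
  ∀ u ∈ H.verts, ∀ v ∈ H.verts, ∀ p : G.Walk u v, p.length = G.dist u v → p.toSubgraph ≤ H

lemma onShortestPath_iff_dist_add_dist (hG : G.Preconnected) {u v z : V} :
    OnShortestPath G u v z ↔ G.dist u z + G.dist z v = G.dist u v := by
  classical
  constructor
  · rintro ⟨p, hp, hz⟩
    have hsplit : (p.takeUntil z hz).length + (p.dropUntil z hz).length = p.length := by
      rw [← Walk.length_append, Walk.take_spec]
    have := dist_le (p.takeUntil z hz)
    have := dist_le (p.dropUntil z hz)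
    have := (hG u z).dist_triangle_left v
    omega
  · intro h
    obtain ⟨p, hp⟩ := (hG u z).exists_walk_length_eq_dist
    obtain ⟨q, hq⟩ := (hG z v).exists_walk_length_eq_dist
    refine ⟨p.append q, by rw [Walk.length_append, hp, hq, h], ?_⟩
    exact (p.mem_support_append_iff q).mpr (Or.inl p.end_mem_support)

lemma onShortestPath_iff_of_gate (hG : G.Preconnected) {μ v a z : V}
    (ha : G.dist μ v + G.dist v a = G.dist μ a) (hz : G.dist μ v + G.dist v z = G.dist μ z) :
    OnShortestPath G v a z ↔ OnShortestPath G μ a z := by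
  rw [onShortestPath_iff_dist_add_dist hG, onShortestPath_iff_dist_add_dist hG]
  omega

lemma Walk.exists_coe_walk_length_eq {H : G.Subgraph} {u v : V} (p : G.Walk u v)
    (hp : p.toSubgraph ≤ H) (hu : u ∈ H.verts) (hv : v ∈ H.verts) :
    ∃ q : H.coe.Walk ⟨u, hu⟩ ⟨v, hv⟩, q.length = p.length := by
  have h := congrArg Walk.length p.map_mapToSubgraph_hom
  rw [Walk.length_map] at h
  exact ⟨p.mapToSubgraph.map (Subgraph.inclusion hp), (Walk.length_map _ _).trans h⟩

namespace Subgraph.IsConvex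

variable {H : G.Subgraph} (hH : H.IsConvex)
include hH

lemma mem_verts_of_onShortestPath {u v z : V} (hu : u ∈ H.verts) (hv : v ∈ H.verts)
    (h : OnShortestPath G u v z) : z ∈ H.verts := by
  obtain ⟨p, hp, hz⟩ := h
  exact (hH u hu v hv p hp).1 (p.mem_verts_toSubgraph.mpr hz)

lemma dist_coe (hG : G.Preconnected) {u v : V} (hu : u ∈ H.verts) (hv : v ∈ H.verts) :
    H.coe.dist ⟨u, hu⟩ ⟨v, hv⟩ = G.dist u v := by
  obtain ⟨p, hp⟩ := (hG u v).exists_walk_length_eq_dist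
  obtain ⟨q, hq⟩ := p.exists_coe_walk_length_eq (hH u hu v hv _ hp) hu hv
  obtain ⟨r, hr⟩ := Reachable.exists_walk_length_eq_dist ⟨q⟩
  have := dist_le q
  have : G.dist u v ≤ (r.map H.hom).length := dist_le _
  rw [Walk.length_map] at this
  omega

lemma preconnected (hG : G.Preconnected) : H.Preconnected :=
  (Subgraph.preconnected_iff_forall_exists_walk_subgraph H).mpr fun {u v} hu hv =>
    let ⟨p, hp⟩ := (hG u v).exists_walk_length_eq_dist
    ⟨p, hH u hu v hv p hp⟩

lemma onShortestPath_coe_iff (hG : G.Preconnected) {u v z : V} (hu : u ∈ H.verts)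
    (hv : v ∈ H.verts) (hz : z ∈ H.verts) :
    OnShortestPath H.coe ⟨u, hu⟩ ⟨v, hv⟩ ⟨z, hz⟩ ↔ OnShortestPath G u v z := by
  rw [onShortestPath_iff_dist_add_dist (hH.preconnected hG), onShortestPath_iff_dist_add_dist hG,
    hH.dist_coe hG, hH.dist_coe hG, hH.dist_coe hG]

lemma exists_gate (hG : G.Preconnected) (hmod : G.IsModular) (hne : H.verts.Nonempty) (μ : V) :
    ∃ v ∈ H.verts, ∀ a ∈ H.verts, G.dist μ v + G.dist v a = G.dist μ a := by
  set v := Function.argminOn (G.dist μ) H.verts hne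
  have hv : v ∈ H.verts := Function.argminOn_mem _ _ hne
  refine ⟨v, hv, fun a ha => ?_⟩
  obtain ⟨m, hμv, hμa, hva⟩ := hmod μ v a
  have hm : m ∈ H.verts := hH.mem_verts_of_onShortestPath hv ha hva
  have hmin : G.dist μ v ≤ G.dist μ m := Function.argminOn_le _ _ hm
  rw [onShortestPath_iff_dist_add_dist hG] at hμv hμa
  obtain rfl : m = v := ((hG m v).dist_eq_zero_iff).mp (by omega)
  exact hμa

lemma medico_coe_of_gate (hG : G.Preconnected) {μ v : V} (hμ : Medico G μ) (hv : v ∈ H.verts)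
    (hgate : ∀ a ∈ H.verts, G.dist μ v + G.dist v a = G.dist μ a) :
    Medico H.coe ⟨v, hv⟩ := by
  rintro ⟨x, hx⟩ ⟨y, hy⟩
  have hmedian : ∀ m (hm : m ∈ H.verts),
      IsMedianPt H.coe ⟨v, hv⟩ ⟨x, hx⟩ ⟨y, hy⟩ ⟨m, hm⟩ ↔ IsMedianPt G μ x y m := fun m hm => by
    simp only [IsMedianPt, hH.onShortestPath_coe_iff hG,
      onShortestPath_iff_of_gate hG (hgate x hx) (hgate m hm),
      onShortestPath_iff_of_gate hG (hgate y hy) (hgate m hm)]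
  obtain ⟨m, hm, huniq⟩ := hμ x y
  have hmH : m ∈ H.verts := hH.mem_verts_of_onShortestPath hx hy hm.2.2
  exact ⟨⟨m, hmH⟩, (hmedian m hmH).mpr hm,
    fun ⟨m', hm'⟩ h => Subtype.ext (huniq m' ((hmedian m' hm').mp h))⟩

end Subgraph.IsConvex

end SimpleGraph

theorem stmt19_general {V : Type*} (G : SimpleGraph V) (hconn : G.Connected)
    (hmod : ∀ u v w : V, ∃ m : V, IsMedianPt G u v w m)
    (hμ : ∃ μ : V, Medico G μ)
    (H : G.Subgraph) (hne : H.verts.Nonempty)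
    (hconv : ∀ u ∈ H.verts, ∀ v ∈ H.verts, ∀ p : G.Walk u v,
      p.length = G.dist u v → p.toSubgraph ≤ H) :
    ∃ v : H.verts, ∀ x y : H.verts, ∃! m : H.verts, IsMedianPt H.coe v x y m := by
  obtain ⟨μ, hμ⟩ := hμ
  have hH : H.IsConvex := hconv
  obtain ⟨v, hv, hgate⟩ := hH.exists_gate hconn.preconnected hmod hne μ
  exact ⟨⟨v, hv⟩, hH.medico_coe_of_gate hconn.preconnected hμ hv hgate⟩

/-- Let `G` be a finite connected modular graph with at least one
medico vertex.  Then every (nonempty) convex subgraph `H` of `G` has a medico vertex: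
some `v ∈ V(H)` with `|I_H(v,x,y)| = 1` for all `x, y ∈ V(H)`. -/
theorem stmt19 {V : Type*} [Fintype V] (G : SimpleGraph V) (hconn : G.Connected)
    (hmod : ∀ u v w : V, ∃ m : V, IsMedianPt G u v w m)
    (hμ : ∃ μ : V, Medico G μ)
    (H : G.Subgraph) (hne : H.verts.Nonempty)
    (hconv : ∀ u ∈ H.verts, ∀ v ∈ H.verts, ∀ p : G.Walk u v,
      p.length = G.dist u v → p.toSubgraph ≤ H) :
    ∃ v : H.verts, ∀ x y : H.verts, ∃! m : H.verts, IsMedianPt H.coe v x y m :=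
  stmt19_general G hconn hmod hμ H hne hconv
end
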